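/- Let E be a real inner product space, C a finite index type, M a finite nonempty type, and for each c ∈ C let x_c : M → E and d_c ∈ E with d_c ≠ 0. Suppose the total energy is location-independent: there is a constant K with Σ_{c ∈ C} ‖x_c μ‖² = K for all μ ∈ M. Then μ₀ ∈ M minimizes the total least-squares reconstruction loss μ ↦ Σ_{c ∈ C} (⨅ (β : ℝ), ‖x_c μ − β • d_c‖²) if and only if μ₀ maximizes the total squared normalized correlation μ ↦ Σ_{c ∈ C} ⟪d_c, x_c μ⟫² / ‖d_c‖². -/

import Mathlib

/-! Projecting onto the line spanned by `d` gives the least-squares residual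
`‖v‖² - ⟪d, v⟫² / ‖d‖²` of `v` against `d`. Summed over channels, the total loss at `μ` is therefore
the location-independent energy `K` minus the total squared normalized correlation, so minimizing
the one is maximizing the other. -/

open scoped RealInnerProductSpace

section LeastSquaresLine

variable {E : Type*} [NormedAddCommGroup E] [InnerProductSpace ℝ E]

lemma norm_sub_smul_sq_eq (v d : E) (hd : d ≠ 0) (β : ℝ) :
    ‖v - β • d‖ ^ 2 =
      (‖v‖ ^ 2 - ⟪d, v⟫ ^ 2 / ‖d‖ ^ 2) + ‖d‖ ^ 2 * (β - ⟪d, v⟫ / ‖d‖ ^ 2) ^ 2 := by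
  have hd' : ‖d‖ ≠ 0 := norm_ne_zero_iff.mpr hd
  rw [norm_sub_sq_real, real_inner_smul_right, norm_smul, Real.norm_eq_abs, mul_pow, sq_abs,
    real_inner_comm]
  field_simp
  ring

lemma iInf_norm_sub_smul_sq (v d : E) (hd : d ≠ 0) :
    ⨅ β : ℝ, ‖v - β • d‖ ^ 2 = ‖v‖ ^ 2 - ⟪d, v⟫ ^ 2 / ‖d‖ ^ 2 := by
  simp_rw [norm_sub_smul_sq_eq v d hd]
  have h_lower : ∀ β : ℝ, ‖v‖ ^ 2 - ⟪d, v⟫ ^ 2 / ‖d‖ ^ 2 ≤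
      (‖v‖ ^ 2 - ⟪d, v⟫ ^ 2 / ‖d‖ ^ 2) + ‖d‖ ^ 2 * (β - ⟪d, v⟫ / ‖d‖ ^ 2) ^ 2 :=
    fun β => le_add_of_nonneg_right (by positivity)
  refine le_antisymm ?_ (le_ciInf h_lower)
  refine (ciInf_le ⟨_, Set.forall_mem_range.mpr h_lower⟩ (⟪d, v⟫ / ‖d‖ ^ 2)).trans_eq ?_
  simp

end LeastSquaresLine

theorem stmt_11_general {E : Type*} [NormedAddCommGroup E] [InnerProductSpace ℝ E]
    {C M : Type*} [Fintype C]
    (x : C → M → E) (d : C → E) (hd : ∀ c, d c ≠ 0)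
    (K : ℝ) (hK : ∀ μ : M, (∑ c : C, ‖x c μ‖ ^ 2) = K) (μ₀ : M) :
    (∀ μ : M, (∑ c : C, ⨅ β : ℝ, ‖x c μ₀ - β • d c‖ ^ 2) ≤
        ∑ c : C, ⨅ β : ℝ, ‖x c μ - β • d c‖ ^ 2) ↔
      (∀ μ : M, (∑ c : C, ⟪d c, x c μ⟫ ^ 2 / ‖d c‖ ^ 2) ≤
        ∑ c : C, ⟪d c, x c μ₀⟫ ^ 2 / ‖d c‖ ^ 2) := by
  have h_loss : ∀ μ : M, (∑ c : C, ⨅ β : ℝ, ‖x c μ - β • d c‖ ^ 2) =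
      K - ∑ c : C, ⟪d c, x c μ⟫ ^ 2 / ‖d c‖ ^ 2 := fun μ => by
    simp_rw [iInf_norm_sub_smul_sq _ _ (hd _), Finset.sum_sub_distrib, hK μ]
  simp_rw [h_loss, sub_le_sub_iff_left]

theorem stmt_11 {E : Type*} [NormedAddCommGroup E] [InnerProductSpace ℝ E]
    {C M : Type*} [Fintype C] [Fintype M] [Nonempty M]
    (x : C → M → E) (d : C → E) (hd : ∀ c, d c ≠ 0)
    (K : ℝ) (hK : ∀ μ : M, (∑ c : C, ‖x c μ‖ ^ 2) = K) (μ₀ : M) :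
    (∀ μ : M, (∑ c : C, ⨅ β : ℝ, ‖x c μ₀ - β • d c‖ ^ 2) ≤
        ∑ c : C, ⨅ β : ℝ, ‖x c μ - β • d c‖ ^ 2) ↔
      (∀ μ : M, (∑ c : C, ⟪d c, x c μ⟫ ^ 2 / ‖d c‖ ^ 2) ≤
        ∑ c : C, ⟪d c, x c μ₀⟫ ^ 2 / ‖d c‖ ^ 2) :=
  stmt_11_general x d hd K hK μ₀
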